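/- arXiv:2002.11733 — 2 statements merged into one kernel-verified Lean document; each statement's English description precedes it below -/
import Mathlib

section
/- Let L ⊆ 𝔽₂ⁿ be a subspace and t ∈ ℝ. Then the real-time partition function of the perpendicular-complement model satisfies Σ_{B ∈ L^⊥} exp(−i·t·‖B‖) = (1/|L|) · (2·exp(−i·t/2))ⁿ · Σ_{A ∈ L} (cos(t/2))^{n−‖A‖} · (i·sin(t/2))^{‖A‖}, as an identity of complex numbers. (Real-time generalized Wegner duality, Eq. (Wegner2): the dual sum runs over A ∈ L with cosine factors for the complement of the support of A and sine factors for the support of A.) -/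
/-!
Poisson summation over the subspace `L`: for any `g`, the sum of `g` over `L^⊥` is `|L|⁻¹` times
the sum over `L` of the Fourier transform `ĝ(A) = ∑_B (-1)^{A·B} g(B)`. For `g(B) = w^{‖B‖}` the
transform factorises over the coordinates into `(1 - w)^{‖A‖} (1 + w)^{n - ‖A‖}` (the MacWilliams
identity), and at `w = e^{-it}` one has `1 + w = 2 e^{-it/2} cos(t/2)` and
`1 - w = 2 e^{-it/2} i sin(t/2)`.
-/

open Finset

/-- Hamming weight of a binary vector. -/
def wt {n : ℕ} (v : Fin n → ZMod 2) : ℕ :=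
  (Finset.univ.filter (fun i => v i = 1)).card

open Matrix

namespace AddChar

lemma map_sum_eq_prod {A M ι : Type*} [AddCommMonoid A] [CommMonoid M] (ψ : AddChar A M)
    (s : Finset ι) (f : ι → A) : ψ (∑ i ∈ s, f i) = ∏ i ∈ s, ψ (f i) := by
  classical
  induction s using Finset.induction with
  | empty => simp
  | insert a s ha ih => rw [sum_insert ha, prod_insert ha, map_add_eq_mul, ih]

lemma sum_mem_eq_ite {G M : Type*} [AddCommGroup G] [Fintype G] [CommRing M] [IsDomain M]
    [DecidableEq M] (ψ : AddChar G M) (H : AddSubgroup G) [DecidablePred (· ∈ H)] :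
    ∑ a ∈ univ.filter (· ∈ H), ψ a = if ∀ a ∈ H, ψ a = 1 then (Nat.card H : M) else 0 := by
  rw [sum_subtype (p := (· ∈ H)) _ (by simp), Nat.card_eq_fintype_card]
  refine (ψ.compAddMonoidHom H.subtype).sum_eq_ite.trans (if_congr ?_ rfl rfl)
  simp [AddChar.eq_zero_iff]

end AddChar

section Fourier

variable {R ι M : Type*} [CommRing R] [Fintype R] [Fintype ι] [DecidableEq ι]

lemma sum_addChar_dotProduct_mul_prod [CommSemiring M] (ψ : AddChar R M) (A : ι → R)
    (f : ι → R → M) :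
    ∑ B : ι → R, ψ (A ⬝ᵥ B) * ∏ i, f i (B i) = ∏ i, ∑ b, ψ (A i * b) * f i b := by
  rw [Fintype.prod_sum]
  refine sum_congr rfl fun B _ => ?_
  rw [dotProduct, ψ.map_sum_eq_prod, prod_mul_distrib]

lemma sum_mem_sum_addChar_dotProduct_mul [CommRing M] [IsDomain M] (ψ : AddChar R M)
    (hψ : ∀ x, ψ x = 1 → x = 0) (L : Submodule R (ι → R)) [DecidablePred (· ∈ L)]
    [DecidablePred fun B : ι → R => ∀ A ∈ L, A ⬝ᵥ B = 0] (g : (ι → R) → M) :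
    ∑ A ∈ univ.filter (· ∈ L), ∑ B, ψ (A ⬝ᵥ B) * g B
      = Nat.card L * ∑ B ∈ univ.filter (fun B => ∀ A ∈ L, A ⬝ᵥ B = 0), g B := by
  classical
  have horth (B : ι → R) : ∑ A ∈ univ.filter (· ∈ L), ψ (A ⬝ᵥ B)
      = if ∀ A ∈ L, A ⬝ᵥ B = 0 then (Nat.card L : M) else 0 := by
    refine ((ψ.compAddMonoidHom ((dotProductBilin R R).flip B).toAddMonoidHom).sum_mem_eq_ite
      L.toAddSubgroup).trans (if_congr ?_ rfl rfl)
    exact forall₂_congr fun A _ => ⟨hψ _, fun h => by simp [h]⟩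
  rw [sum_comm, mul_sum, sum_filter]
  refine sum_congr rfl fun B _ => ?_
  rw [← sum_mul, horth, ite_mul, zero_mul]

end Fourier

noncomputable def signChar : AddChar (ZMod 2) ℂ where
  toFun x := (-1) ^ x.val
  map_zero_eq_one' := by simp
  map_add_eq_mul' a b := by rw [ZMod.val_add, ← neg_one_pow_eq_pow_mod_two, pow_add]

lemma signChar_eq_one_iff (x : ZMod 2) : signChar x = 1 ↔ x = 0 := by
  rw [← ZMod.val_eq_zero]
  change (-1 : ℂ) ^ x.val = 1 ↔ _
  rw [neg_one_pow_eq_one_iff_even (by norm_num), Nat.even_iff]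
  have := ZMod.val_lt x
  omega

lemma sum_signChar_mul_ite (a : ZMod 2) (w : ℂ) :
    ∑ b, signChar (a * b) * (if b = 1 then w else 1) = if a = 1 then 1 - w else 1 + w := by
  have hsign : signChar 1 = -1 := by
    change (-1 : ℂ) ^ (1 : ZMod 2).val = -1
    simp [ZMod.val_one]
  rw [show (univ : Finset (ZMod 2)) = {0, 1} by decide, sum_pair (by decide)]
  rcases (by decide : ∀ x : ZMod 2, x = 0 ∨ x = 1) a with rfl | rfl <;> simp [hsign]
  ring

lemma wt_le {n : ℕ} (v : Fin n → ZMod 2) : wt v ≤ n :=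
  (card_filter_le _ _).trans (card_fin n).le

lemma prod_ite_eq_pow_wt_mul_pow {M : Type*} [CommMonoid M] {n : ℕ} (v : Fin n → ZMod 2)
    (a b : M) : ∏ i, (if v i = 1 then a else b) = a ^ wt v * b ^ (n - wt v) := by
  rw [prod_ite, prod_const, prod_const, wt, filter_not, card_sdiff, card_univ, Fintype.card_fin]
  simp

lemma sum_signChar_dotProduct_mul_pow_wt {n : ℕ} (A : Fin n → ZMod 2) (w : ℂ) :
    ∑ B, signChar (A ⬝ᵥ B) * w ^ wt B = (1 - w) ^ wt A * (1 + w) ^ (n - wt A) := by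
  have hpow (B : Fin n → ZMod 2) : w ^ wt B = ∏ i, if B i = 1 then w else 1 := by
    rw [prod_ite_eq_pow_wt_mul_pow, one_pow, mul_one]
  simp_rw [hpow]
  rw [sum_addChar_dotProduct_mul_prod (f := fun _ b => if b = 1 then w else 1)]
  simp_rw [sum_signChar_mul_ite, prod_ite_eq_pow_wt_mul_pow]

theorem card_mul_sum_orthogonal_pow_wt {n : ℕ} (L : Submodule (ZMod 2) (Fin n → ZMod 2))
    [DecidablePred (· ∈ L)] [DecidablePred fun B : Fin n → ZMod 2 => ∀ A ∈ L, A ⬝ᵥ B = 0]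
    (w : ℂ) :
    Nat.card L * ∑ B ∈ univ.filter (fun B => ∀ A ∈ L, A ⬝ᵥ B = 0), w ^ wt B
      = ∑ A ∈ univ.filter (· ∈ L), (1 - w) ^ wt A * (1 + w) ^ (n - wt A) := by
  rw [← sum_mem_sum_addChar_dotProduct_mul signChar (fun x => (signChar_eq_one_iff x).1)]
  simp_rw [sum_signChar_dotProduct_mul_pow_wt]

section Trigonometric

open Complex

lemma exp_neg_I_mul_half (t : ℝ) :
    exp (-I * t / 2) = cos (t / 2 : ℝ) - I * sin (t / 2 : ℝ) := by
  rw [show -I * t / 2 = ((-(t / 2) : ℝ) : ℂ) * I by push_cast; ring, exp_mul_I]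
  push_cast
  rw [cos_neg, sin_neg]
  ring

lemma exp_neg_I_mul_eq_sq (t : ℝ) : exp (-I * t) = exp (-I * t / 2) ^ 2 := by
  rw [← exp_nat_mul]
  ring_nf

lemma one_add_exp_neg_I_mul (t : ℝ) :
    1 + exp (-I * t) = 2 * exp (-I * t / 2) * Real.cos (t / 2) := by
  rw [exp_neg_I_mul_eq_sq, exp_neg_I_mul_half]
  push_cast
  linear_combination -cos_sq_add_sin_sq ((t : ℂ) / 2) + sin ((t : ℂ) / 2) ^ 2 * I_sq

lemma one_sub_exp_neg_I_mul (t : ℝ) :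
    1 - exp (-I * t) = 2 * exp (-I * t / 2) * (I * Real.sin (t / 2)) := by
  rw [exp_neg_I_mul_eq_sq, exp_neg_I_mul_half]
  push_cast
  linear_combination -cos_sq_add_sin_sq ((t : ℂ) / 2) + sin ((t : ℂ) / 2) ^ 2 * I_sq

end Trigonometric

open scoped Classical in
/-- **Real-time generalized Wegner duality** (Eq. (Wegner2)): the real-time partition
function of the perpendicular-complement model `L^⊥` of a subspace `L ⊆ 𝔽₂ⁿ` equals
`(1/|L|)(2 e^{−it/2})ⁿ Σ_{A∈L} cos^{n−‖A‖}(t/2) (i sin)^{‖A‖}(t/2)`. -/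
theorem real_time_wegner_duality {n : ℕ}
    (L : Submodule (ZMod 2) (Fin n → ZMod 2)) (t : ℝ) :
    ∑ B ∈ Finset.univ.filter (fun B : Fin n → ZMod 2 => ∀ A ∈ L, ∑ i, A i * B i = 0),
        Complex.exp (-Complex.I * t * (wt B : ℂ))
      = (1 / (Nat.card L : ℂ)) * (2 * Complex.exp (-Complex.I * t / 2)) ^ n *
          ∑ A ∈ Finset.univ.filter (fun A => A ∈ L),
            (Real.cos (t / 2) : ℂ) ^ (n - wt A) *
              (Complex.I * (Real.sin (t / 2) : ℂ)) ^ wt A := by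
  have hL : (Nat.card L : ℂ) ≠ 0 := Nat.cast_ne_zero.2 Nat.card_pos.ne'
  have hexp (B : Fin n → ZMod 2) :
      Complex.exp (-Complex.I * t * wt B) = Complex.exp (-Complex.I * t) ^ wt B := by
    rw [← Complex.exp_nat_mul, mul_comm]
  have hterm (A : Fin n → ZMod 2) :
      (1 - Complex.exp (-Complex.I * t)) ^ wt A * (1 + Complex.exp (-Complex.I * t)) ^ (n - wt A)
        = (2 * Complex.exp (-Complex.I * t / 2)) ^ n *
            ((Real.cos (t / 2) : ℂ) ^ (n - wt A) * (Complex.I * (Real.sin (t / 2) : ℂ)) ^ wt A) := by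
    rw [one_sub_exp_neg_I_mul, one_add_exp_neg_I_mul, mul_pow, mul_pow,
      ← pow_mul_pow_sub _ (wt_le A)]
    ring
  simp_rw [hexp]
  rw [mul_assoc, mul_sum, one_div, eq_inv_mul_iff_mul_eq₀ hL]
  simp_rw [← hterm]
  -- `A ⬝ᵥ B` unfolds to the `∑ i, A i * B i` of the statement.
  exact card_mul_sum_orthogonal_pow_wt L _
end

section
/- Let L ⊆ 𝔽₂ⁿ be a subspace, A ∈ 𝔽₂ⁿ, and t ∈ ℝ. Then the character-twisted real-time partition function satisfies Σ_{J ∈ L^⊥} (−1)^{χ(A·J)} · exp(−i·t·‖J‖) = (1/|L|) · (2·exp(−i·t/2))ⁿ · Σ_{C ∈ L} (cos(t/2))^{n−‖A+C‖} · (i·sin(t/2))^{‖A+C‖}. (Eq. (ZofA): inserting a sign (−1)^{A·J} into the real-time partition function shifts the Wegner-dual sum to the affine subspace A + L.) -/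
/-!
Write `c = cos (t/2)`, `s = i sin (t/2)` and `ψ x = (-1)^x` on `𝔽₂`. Each site contributes
`exp (-i t Jᵢ) = exp (-i t/2) (c + s ψ(Jᵢ))`, and multiplying out the product over the sites gives
`exp (-i t ‖J‖) = exp (-i t/2)ⁿ ∑_D c^(n-‖D‖) s^‖D‖ ψ(D·J)`. After the twist by `ψ(A·J)` and the
substitution `D = A + C`, summing over `J ∈ L^⊥` leaves only the `C` with `J ↦ ψ(C·J)` trivial on
`L^⊥`, i.e. `C ∈ L^⊥⊥ = L`, each counted `|L^⊥| = 2ⁿ/|L|` times.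
-/

open Finset

lemma AddChar.map_sum_eq_prod_s4 {A M ι : Type*} [AddCommMonoid A] [CommMonoid M] (ψ : AddChar A M)
    (s : Finset ι) (f : ι → A) : ψ (∑ i ∈ s, f i) = ∏ i ∈ s, ψ (f i) :=
  map_prod ψ.toMonoidHom (fun i => Multiplicative.ofAdd (f i)) s

namespace WegnerDuality

lemma zmod_two_eq_zero_or_eq_one (x : ZMod 2) : x = 0 ∨ x = 1 := by
  decide +revert

lemma sum_zmod_two {M : Type*} [AddCommMonoid M] (f : ZMod 2 → M) : ∑ x, f x = f 0 + f 1 :=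
  Fin.sum_univ_two f

section SignCharacter

variable (R : Type*) [CommRing R]

def signChar : AddChar (ZMod 2) R where
  toFun x := (-1) ^ x.val
  map_zero_eq_one' := by simp
  map_add_eq_mul' a b := by rw [← pow_add, ZMod.val_add, ← neg_one_pow_eq_pow_mod_two]

variable {R}

lemma signChar_apply (x : ZMod 2) : signChar R x = (-1) ^ x.val := rfl

lemma signChar_eq_one_iff [IsDomain R] [CharZero R] {x : ZMod 2} : signChar R x = 1 ↔ x = 0 := by
  have h : (-1 : R) ≠ 1 := by rw [Ne, neg_one_eq_one_iff, ringChar.eq_zero]; norm_num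
  obtain rfl | rfl := zmod_two_eq_zero_or_eq_one x <;> simp [signChar_apply, ZMod.val_one, h]

end SignCharacter

section Orthogonality

variable {M : Type*} [AddCommGroup M] [Module (ZMod 2) M] [Fintype M]
  {B : LinearMap.BilinForm (ZMod 2) M}

/-- `J ↦ ψ (B V J)` is a character of `L^⊥`, trivial exactly when `V ∈ L^⊥⊥ = L`. -/
lemma sum_orthogonal_signChar (hB : B.Nondegenerate) (hB₀ : B.IsRefl)
    (L : Submodule (ZMod 2) M) [Fintype (B.orthogonal L)] (V : M) [Decidable (V ∈ L)] :
    ∑ J : B.orthogonal L, signChar ℂ (B V J)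
      = if V ∈ L then (Nat.card (B.orthogonal L) : ℂ) else 0 := by
  let ψ : AddChar (B.orthogonal L) ℂ :=
    (signChar ℂ).compAddMonoidHom ((B V).domRestrict (B.orthogonal L)).toAddMonoidHom
  have hψ : ψ = 0 ↔ V ∈ L := by
    conv_rhs => rw [← LinearMap.BilinForm.orthogonal_orthogonal hB hB₀ L]
    simp [ψ, AddChar.eq_zero_iff, signChar_eq_one_iff, LinearMap.BilinForm.mem_orthogonal_iff,
      hB₀.eq_iff]
  classical
  change ∑ J, ψ J = _
  rw [AddChar.sum_eq_ite, Nat.card_eq_fintype_card]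
  exact if_congr hψ rfl rfl

lemma sum_orthogonal_sum_mul_signChar (hB : B.Nondegenerate) (hB₀ : B.IsRefl)
    (L : Submodule (ZMod 2) M) [Fintype (B.orthogonal L)] [DecidablePred (· ∈ L)] (f : M → ℂ) :
    ∑ J : B.orthogonal L, ∑ C, f C * signChar ℂ (B C J)
      = Nat.card (B.orthogonal L) * ∑ C ∈ univ.filter (· ∈ L), f C := by
  rw [Finset.sum_comm, Finset.sum_filter, Finset.mul_sum]
  refine Finset.sum_congr rfl fun C _ => ?_
  rw [← Finset.mul_sum, sum_orthogonal_signChar hB hB₀]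
  split_ifs <;> ring

end Orthogonality

lemma card_orthogonal_mul_card {K V : Type*} [Field K] [Finite K] [AddCommGroup V] [Module K V]
    [Module.Finite K V] {B : LinearMap.BilinForm K V} (hB : B.Nondegenerate)
    (W : Submodule K V) :
    Nat.card (B.orthogonal W) * Nat.card W = Nat.card V := by
  rw [Module.natCard_eq_pow_finrank (K := K) (V := B.orthogonal W),
    Module.natCard_eq_pow_finrank (K := K) (V := W),
    Module.natCard_eq_pow_finrank (K := K) (V := V), ← pow_add,
    LinearMap.BilinForm.finrank_orthogonal hB, Nat.sub_add_cancel (Submodule.finrank_le W)]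

section DotProduct

variable {K ι : Type*} [CommRing K] [Fintype ι]

lemma dotProductBilin_isRefl : (dotProductBilin K K : LinearMap.BilinForm K (ι → K)).IsRefl :=
  fun x y h => by rwa [dotProductBilin_apply_apply, dotProduct_comm] at h

lemma dotProductBilin_nondegenerate [DecidableEq ι] :
    (dotProductBilin K K : LinearMap.BilinForm K (ι → K)).Nondegenerate := by
  refine (LinearMap.IsRefl.nondegenerate_iff_separatingLeft dotProductBilin_isRefl).2 ?_
  intro x hx
  funext i
  simpa using hx (Pi.single i 1)

end DotProduct

section HammingWeight

variable {n : ℕ}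

lemma wt_eq_sum_val (v : Fin n → ZMod 2) : wt v = ∑ i, (v i).val := by
  rw [wt, Finset.card_filter]
  refine Finset.sum_congr rfl fun i _ => ?_
  obtain h | h := zmod_two_eq_zero_or_eq_one (v i) <;> simp [h, ZMod.val_one]

lemma sum_one_sub_val (v : Fin n → ZMod 2) : ∑ i, (1 - (v i).val) = n - wt v := by
  rw [Finset.sum_tsub_distrib _ fun i _ => Nat.le_of_lt_succ (ZMod.val_lt (v i)), wt_eq_sum_val]
  simp

end HammingWeight

/-- `D` records the sites at which the `s`-term of the factor is taken. -/
lemma prod_add_mul_signChar {R : Type*} [CommRing R] {n : ℕ} (c s : R) (J : Fin n → ZMod 2) :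
    ∏ i, (c + s * signChar R (J i))
      = ∑ D : Fin n → ZMod 2, c ^ (n - wt D) * s ^ wt D * signChar R (D ⬝ᵥ J) := by
  have hsite : ∀ x, c + s * signChar R x
      = ∑ d : ZMod 2, c ^ (1 - d.val) * s ^ d.val * signChar R (d * x) := by
    intro x
    rw [sum_zmod_two]
    simp [ZMod.val_one]
  rw [Finset.prod_congr rfl fun i _ => hsite (J i), Fintype.prod_sum]
  refine Finset.sum_congr rfl fun D _ => ?_
  rw [Finset.prod_mul_distrib, Finset.prod_mul_distrib, Finset.prod_pow_eq_pow_sum,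
    Finset.prod_pow_eq_pow_sum, ← AddChar.map_sum_eq_prod_s4, sum_one_sub_val, ← wt_eq_sum_val]
  rfl

section RealTime

open Complex

variable (t : ℝ) {n : ℕ}

lemma exp_neg_mul_I_mul_val (x : ZMod 2) :
    exp (-I * t * x.val)
      = exp (-I * t / 2) * (Real.cos (t / 2) + I * Real.sin (t / 2) * signChar ℂ x) := by
  have hcos_add_sin : (Real.cos (t / 2) : ℂ) + I * Real.sin (t / 2) = exp (I * t / 2) := by
    rw [show I * t / 2 = (t / 2 : ℝ) * I by push_cast; ring, exp_mul_I, ofReal_cos, ofReal_sin]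
    ring
  have hcos_sub_sin : (Real.cos (t / 2) : ℂ) - I * Real.sin (t / 2) = exp (-I * t / 2) := by
    rw [show -I * t / 2 = (-(t / 2) : ℝ) * I by push_cast; ring, exp_mul_I, ← ofReal_cos,
      ← ofReal_sin, Real.cos_neg, Real.sin_neg]
    push_cast
    ring
  obtain rfl | rfl := zmod_two_eq_zero_or_eq_one x
  · simp only [signChar_apply, ZMod.val_zero, pow_zero, mul_one, hcos_add_sin, ← exp_add]
    ring_nf
  · simp only [signChar_apply, ZMod.val_one, pow_one, mul_neg_one, ← sub_eq_add_neg,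
      hcos_sub_sin, ← exp_add]
    ring_nf

lemma exp_neg_mul_I_mul_wt (J : Fin n → ZMod 2) :
    exp (-I * t * wt J)
      = exp (-I * t / 2) ^ n *
          ∏ i, ((Real.cos (t / 2) : ℂ) + I * Real.sin (t / 2) * signChar ℂ (J i)) := by
  rw [wt_eq_sum_val, Nat.cast_sum, Finset.mul_sum, exp_sum,
    Finset.prod_congr rfl fun i _ => exp_neg_mul_I_mul_val t (J i), Finset.prod_mul_distrib,
    Finset.prod_const, Finset.card_univ, Fintype.card_fin]

lemma signChar_dotProduct_mul_exp_wt (A J : Fin n → ZMod 2) :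
    signChar ℂ (A ⬝ᵥ J) * exp (-I * t * wt J)
      = exp (-I * t / 2) ^ n *
          ∑ C : Fin n → ZMod 2, (Real.cos (t / 2) : ℂ) ^ (n - wt (A + C)) *
            (I * Real.sin (t / 2)) ^ wt (A + C) * signChar ℂ (C ⬝ᵥ J) := by
  rw [exp_neg_mul_I_mul_wt, prod_add_mul_signChar, mul_left_comm, Finset.mul_sum]
  congr 1
  refine Fintype.sum_equiv (Equiv.addLeft A) _ _ fun D => ?_
  rw [Equiv.coe_addLeft, ← add_assoc, ZModModule.add_self, zero_add, add_dotProduct,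
    AddChar.map_add_eq_mul]
  ring

end RealTime

end WegnerDuality

open WegnerDuality

open scoped Classical in
/-- **Character-twisted real-time Wegner duality** (Eq. (ZofA)): inserting a sign
`(−1)^{χ(A·J)}` into the real-time partition function over `L^⊥` shifts the Wegner-dual
sum to the affine subspace `A + L`. -/
theorem twisted_real_time_wegner_duality {n : ℕ}
    (L : Submodule (ZMod 2) (Fin n → ZMod 2)) (A : Fin n → ZMod 2) (t : ℝ) :
    ∑ J ∈ Finset.univ.filter (fun J : Fin n → ZMod 2 => ∀ B ∈ L, ∑ i, B i * J i = 0),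
        (-1 : ℂ) ^ (∑ i, A i * J i).val * Complex.exp (-Complex.I * t * (wt J : ℂ))
      = (1 / (Nat.card L : ℂ)) * (2 * Complex.exp (-Complex.I * t / 2)) ^ n *
          ∑ C ∈ Finset.univ.filter (fun C => C ∈ L),
            (Real.cos (t / 2) : ℂ) ^ (n - wt (A + C)) *
              (Complex.I * (Real.sin (t / 2) : ℂ)) ^ wt (A + C) := by
  set B : LinearMap.BilinForm (ZMod 2) (Fin n → ZMod 2) := dotProductBilin (ZMod 2) (ZMod 2)
  have hcard : (Nat.card (B.orthogonal L) : ℂ) * Nat.card L = 2 ^ n := by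
    exact_mod_cast (card_orthogonal_mul_card dotProductBilin_nondegenerate L).trans (by simp)
  have hL : (Nat.card L : ℂ) ≠ 0 := Nat.cast_ne_zero.2 Nat.card_pos.ne'
  rw [Finset.sum_subtype _ (p := (· ∈ B.orthogonal L)) fun J => by
    simp [B, LinearMap.BilinForm.mem_orthogonal_iff, dotProduct]]
  calc _ = ∑ J : B.orthogonal L, Complex.exp (-Complex.I * t / 2) ^ n *
          ∑ C, (Real.cos (t / 2) : ℂ) ^ (n - wt (A + C)) *
            (Complex.I * Real.sin (t / 2)) ^ wt (A + C) * signChar ℂ (B C J) :=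
        Finset.sum_congr rfl fun J _ => signChar_dotProduct_mul_exp_wt t A J
    _ = _ := by
        rw [← Finset.mul_sum, sum_orthogonal_sum_mul_signChar dotProductBilin_nondegenerate
          dotProductBilin_isRefl, mul_pow, ← hcard]
        field_simp
        ring
end
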